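/- Let Ŵ2 and Ŵ3 be independent real random variables, exponentially distributed with means σ̂2² > 0 and σ̂3² > 0 respectively. Let P1, P2, P3, γ̄2 > 0 with λ_P := P2/P1 > γ̄2, and let I_X̃ > 0, I_Ỹ > 0 be constants. Define X̃ = Ŵ2·P2/(Ŵ2·P1 + I_X̃) and Ỹ = Ŵ3·P3/I_Ỹ. Then P{ X̃ + Ỹ < γ̄2 } = 1 − exp( −I_X̃·χ/(P1·σ̂2²) ) − (I_X̃/(P1·σ̂2²)) · exp( I_Ỹ·(λ_P − γ̄2)/(P3·σ̂3²) ) · Θ(χ), where χ = γ̄2/(λ_P − γ̄2) and Θ(χ) = ∫₀^χ exp( −(I_X̃/(P1·σ̂2²))·u − (I_Ỹ·λ_P/(P3·σ̂3²))·(1/(1+u)) ) du. -/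

import Mathlib

/-!
Given `Ŵ2 = x`, the outage event is `Ŵ3 < g x` with `g x = (γ̄2 - x P2 / (x P1 + I_X̃)) I_Ỹ / P3`,
so by independence the outage probability is `E[1 - exp (-g Ŵ2 / σ̂3²)]`, the integrand being
clipped at `0`. Since `g x ≥ 0` exactly for `x ≤ c = γ̄2 I_X̃ / (P2 - γ̄2 P1)`, this is an integral
over `[0, c]` against the density of `Ŵ2`. The substitution `x = (I_X̃ / P1) u` maps `[0, c]` onto
`[0, χ]` and turns `x P2 / (x P1 + I_X̃)` into `λ_P u / (1 + u) = λ_P - λ_P / (1 + u)`, which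
produces `Θ(χ)`.
-/

open MeasureTheory ProbabilityTheory Set Real

noncomputable def expMean (a : ℝ) : Measure ℝ :=
  volume.withDensity fun x => ENNReal.ofReal (if 0 ≤ x then (1 / a) * Real.exp (-x / a) else 0)

lemma expMean_eq_expMeasure (a : ℝ) : expMean a = expMeasure a⁻¹ := by
  rw [expMean, expMeasure, gammaMeasure]
  congr 1
  funext x
  change _ = exponentialPDF a⁻¹ x
  rw [exponentialPDF_eq, one_div, neg_div, div_eq_inv_mul]

lemma isProbabilityMeasure_expMean {a : ℝ} (ha : 0 < a) : IsProbabilityMeasure (expMean a) :=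
  expMean_eq_expMeasure a ▸ isProbabilityMeasure_expMeasure (inv_pos.2 ha)

lemma aemeasurable_of_map_eq_expMean {Ω : Type*} [MeasurableSpace Ω] {P : Measure Ω}
    {X : Ω → ℝ} {a : ℝ} (ha : 0 < a) (hX : P.map X = expMean a) : AEMeasurable X P :=
  have := isProbabilityMeasure_expMean ha
  aemeasurable_of_map_neZero (hX ▸ inferInstance)

lemma expMean_Iio {a : ℝ} (ha : 0 < a) (s : ℝ) :
    expMean a (Iio s) = ENNReal.ofReal (1 - exp (-s / a)) := by
  have := isProbabilityMeasure_expMeasure (inv_pos.2 ha)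
  have hac : expMean a ≪ volume := withDensity_absolutelyContinuous _ _
  rw [measure_congr (hac.ae_eq Iio_ae_eq_Iic), expMean_eq_expMeasure, ← ofReal_cdf,
    cdf_expMeasure_eq (inv_pos.2 ha)]
  split_ifs with hs
  · rw [neg_div, div_eq_inv_mul]
  · rw [ENNReal.ofReal_zero, eq_comm, ENNReal.ofReal_eq_zero, sub_nonpos, one_le_exp_iff]
    exact div_nonneg (by linarith) ha.le

lemma lintegral_ofReal_expMean {a c : ℝ} (ha : 0 < a) (hc : 0 ≤ c) {f : ℝ → ℝ}
    (hf : ContinuousOn f (Icc 0 c)) (hf_nonneg : ∀ x ∈ Icc 0 c, 0 ≤ f x)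
    (hf_nonpos : ∀ x, c ≤ x → f x ≤ 0) :
    ∫⁻ x, ENNReal.ofReal (f x) ∂expMean a =
      ENNReal.ofReal (∫ x in 0..c, a⁻¹ * exp (-x / a) * f x) := by
  have hdensity (x : ℝ) :
      ENNReal.ofReal (if 0 ≤ x then (1 / a) * exp (-x / a) else 0) * ENNReal.ofReal (f x) =
        (Icc 0 c).indicator (fun x => ENNReal.ofReal (a⁻¹ * exp (-x / a) * f x)) x := by
    by_cases hx : x ∈ Icc 0 c
    · rw [indicator_of_mem hx, if_pos hx.1, one_div, ← ENNReal.ofReal_mul (by positivity)]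
    · rw [indicator_of_notMem hx]
      rcases lt_or_ge x 0 with hx0 | hx0
      · rw [if_neg hx0.not_ge, ENNReal.ofReal_zero, zero_mul]
      · rw [ENNReal.ofReal_of_nonpos (hf_nonpos x (not_lt.1 fun h => hx ⟨hx0, h.le⟩)), mul_zero]
  have hint : IntegrableOn (fun x => a⁻¹ * exp (-x / a) * f x) (Icc 0 c) :=
    ((by fun_prop : Continuous fun x => a⁻¹ * exp (-x / a)).continuousOn.mul hf).integrableOn_Icc
  rw [expMean, lintegral_withDensity_eq_lintegral_mul_non_measurable _
    ((Measurable.ite measurableSet_Ici (by fun_prop) measurable_const).ennreal_ofReal)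
    (by simp), Pi.mul_def, funext hdensity, lintegral_indicator measurableSet_Icc,
    ← ofReal_integral_eq_lintegral_ofReal hint
      ((ae_restrict_iff' measurableSet_Icc).2 (.of_forall fun x hx =>
        mul_nonneg (by positivity) (hf_nonneg x hx))),
    integral_Icc_eq_integral_Ioc, intervalIntegral.integral_of_le hc]

lemma integral_inv_mul_exp_neg_div (a s t : ℝ) :
    ∫ x in s..t, a⁻¹ * exp (-x / a) = exp (-s / a) - exp (-t / a) := by
  have hderiv (x : ℝ) : HasDerivAt (fun x => -exp (-x / a)) (a⁻¹ * exp (-x / a)) x := by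
    refine (((hasDerivAt_id x).neg.div_const a).exp).neg.congr_deriv ?_
    simp only [Pi.neg_apply, id]
    ring
  rw [intervalIntegral.integral_eq_sub_of_hasDerivAt (fun x _ => hderiv x)
    (by apply Continuous.intervalIntegrable; fun_prop)]
  ring

lemma one_sub_exp_neg_div_nonneg {t b : ℝ} (ht : 0 ≤ t) (hb : 0 ≤ b) : 0 ≤ 1 - exp (-t / b) :=
  sub_nonneg.2 (exp_le_one_iff.2 (div_nonpos_of_nonpos_of_nonneg (neg_nonpos.2 ht) hb))

lemma one_sub_exp_neg_div_nonpos {t b : ℝ} (ht : t ≤ 0) (hb : 0 ≤ b) : 1 - exp (-t / b) ≤ 0 :=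
  sub_nonpos.2 (one_le_exp_iff.2 (div_nonneg (neg_nonneg.2 ht) hb))

lemma measure_lt_comp_of_indepFun {Ω α : Type*} [MeasurableSpace Ω] [MeasurableSpace α]
    {P : Measure Ω} [IsFiniteMeasure P] {X : Ω → α} {Y : Ω → ℝ}
    (hX : AEMeasurable X P) (hY : AEMeasurable Y P) (hind : IndepFun X Y P)
    {g : α → ℝ} (hg : Measurable g) :
    P {ω | Y ω < g (X ω)} = ∫⁻ x, P.map Y (Iio (g x)) ∂P.map X := by
  have hS : MeasurableSet {p : α × ℝ | p.2 < g p.1} :=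
    measurableSet_lt measurable_snd (hg.comp measurable_fst)
  calc P {ω | Y ω < g (X ω)} = P.map (fun ω => (X ω, Y ω)) {p | p.2 < g p.1} :=
        (Measure.map_apply_of_aemeasurable (hX.prodMk hY) hS).symm
    _ = ((P.map X).prod (P.map Y)) {p | p.2 < g p.1} := by
        rw [(indepFun_iff_map_prod_eq_prod_map_map hX hY).1 hind]
    _ = _ := Measure.prod_apply hS

noncomputable def relayOutageThreshold (P1 P2 P3 IX IY γ2 x : ℝ) : ℝ :=
  (γ2 - x * P2 / (x * P1 + IX)) * IY / P3

section relayOutageThreshold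

variable {P1 P2 P3 IX IY γ2 σ2 σ3 χ : ℝ}

lemma lt_relayOutageThreshold_iff (hP3 : 0 < P3) (hIY : 0 < IY) (x y : ℝ) :
    y < relayOutageThreshold P1 P2 P3 IX IY γ2 x ↔
      x * P2 / (x * P1 + IX) + y * P3 / IY < γ2 := by
  rw [relayOutageThreshold, lt_div_iff₀ hP3, ← div_lt_iff₀ hIY, lt_sub_iff_add_lt']

lemma measurable_relayOutageThreshold :
    Measurable (relayOutageThreshold P1 P2 P3 IX IY γ2) := by
  unfold relayOutageThreshold
  fun_prop

lemma continuousOn_relayOutageThreshold (hP1 : 0 < P1) (hIX : 0 < IX) :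
    ContinuousOn (relayOutageThreshold P1 P2 P3 IX IY γ2) (Ici 0) := by
  unfold relayOutageThreshold
  refine ((continuousOn_const.sub (ContinuousOn.div (by fun_prop) (by fun_prop) ?_)).mul
    continuousOn_const).div_const _
  intro x hx
  have : 0 ≤ x * P1 := mul_nonneg hx hP1.le
  positivity

lemma relayOutageThreshold_eq_div (hP1 : 0 < P1) (hIX : 0 < IX) {x : ℝ} (hx : 0 ≤ x) :
    relayOutageThreshold P1 P2 P3 IX IY γ2 x =
      (γ2 * IX - x * (P2 - γ2 * P1)) / (x * P1 + IX) * IY / P3 := by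
  have : 0 < x * P1 + IX := by nlinarith
  rw [relayOutageThreshold]
  field_simp
  ring

lemma relayOutageThreshold_nonneg (hP1 : 0 < P1) (hP3 : 0 < P3) (hIX : 0 < IX) (hIY : 0 < IY)
    (hgap : 0 < P2 - γ2 * P1) {x : ℝ} (hx : 0 ≤ x) (hxc : x ≤ γ2 * IX / (P2 - γ2 * P1)) :
    0 ≤ relayOutageThreshold P1 P2 P3 IX IY γ2 x := by
  rw [le_div_iff₀ hgap] at hxc
  rw [relayOutageThreshold_eq_div hP1 hIX hx]
  have : 0 ≤ γ2 * IX - x * (P2 - γ2 * P1) := by linarith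
  have : 0 < x * P1 + IX := by nlinarith
  positivity

lemma relayOutageThreshold_nonpos (hP1 : 0 < P1) (hP3 : 0 < P3) (hIX : 0 < IX) (hIY : 0 < IY)
    (hgap : 0 < P2 - γ2 * P1) {x : ℝ} (hx : 0 ≤ x) (hcx : γ2 * IX / (P2 - γ2 * P1) ≤ x) :
    relayOutageThreshold P1 P2 P3 IX IY γ2 x ≤ 0 := by
  rw [div_le_iff₀ hgap] at hcx
  rw [relayOutageThreshold_eq_div hP1 hIX hx]
  have : 0 < x * P1 + IX := by nlinarith
  exact div_nonpos_of_nonpos_of_nonneg (mul_nonpos_of_nonpos_of_nonneg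
    (div_nonpos_of_nonpos_of_nonneg (by linarith) this.le) hIY.le) hP3.le

lemma relayOutageThreshold_div_mul (hP1 : P1 ≠ 0) (hIX : IX ≠ 0) {u : ℝ} (hu : 1 + u ≠ 0) :
    relayOutageThreshold P1 P2 P3 IX IY γ2 (IX / P1 * u) =
      (γ2 - P2 / P1 + P2 / P1 * (1 / (1 + u))) * IY / P3 := by
  have hden : IX / P1 * u * P1 + IX = IX * (1 + u) := by field_simp; ring
  rw [relayOutageThreshold, hden]
  field_simp
  ring

lemma integral_mul_exp_neg_relayOutageThreshold (hP1 : P1 ≠ 0) (hIX : IX ≠ 0) (hχ : 0 ≤ χ) :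
    ∫ x in 0..IX / P1 * χ,
        σ2⁻¹ * exp (-x / σ2) * exp (-relayOutageThreshold P1 P2 P3 IX IY γ2 x / σ3) =
      IX / (P1 * σ2) * exp (IY * (P2 / P1 - γ2) / (P3 * σ3)) *
        ∫ u in 0..χ, exp (-(IX / (P1 * σ2)) * u - IY * (P2 / P1) / (P3 * σ3) * (1 / (1 + u))) := by
  have hκ : IX / P1 ≠ 0 := div_ne_zero hIX hP1
  have hsubst := intervalIntegral.integral_comp_mul_left (a := 0) (b := χ)
    (fun x => σ2⁻¹ * exp (-x / σ2) * exp (-relayOutageThreshold P1 P2 P3 IX IY γ2 x / σ3)) hκ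
  rw [mul_zero, smul_eq_mul, eq_inv_mul_iff_mul_eq₀ hκ] at hsubst
  have hintegrand : EqOn
      (fun u => σ2⁻¹ * exp (-(IX / P1 * u) / σ2) *
        exp (-relayOutageThreshold P1 P2 P3 IX IY γ2 (IX / P1 * u) / σ3))
      (fun u => σ2⁻¹ * exp (IY * (P2 / P1 - γ2) / (P3 * σ3)) *
        exp (-(IX / (P1 * σ2)) * u - IY * (P2 / P1) / (P3 * σ3) * (1 / (1 + u))))
      (uIcc 0 χ) := by
    intro u hu
    rw [uIcc_of_le hχ] at hu
    dsimp only
    rw [relayOutageThreshold_div_mul hP1 hIX (by linarith [hu.1]), mul_assoc, mul_assoc,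
      ← exp_add, ← exp_add]
    congr 2
    ring
  rw [← hsubst, intervalIntegral.integral_congr hintegrand, intervalIntegral.integral_const_mul]
  field_simp

lemma integral_mul_one_sub_exp_neg_relayOutageThreshold (hP1 : 0 < P1) (hIX : 0 < IX)
    (hχ : 0 ≤ χ) :
    ∫ x in 0..IX / P1 * χ,
        σ2⁻¹ * exp (-x / σ2) * (1 - exp (-relayOutageThreshold P1 P2 P3 IX IY γ2 x / σ3)) =
      1 - exp (-(IX * χ) / (P1 * σ2)) - IX / (P1 * σ2) * exp (IY * (P2 / P1 - γ2) / (P3 * σ3)) *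
        ∫ u in 0..χ, exp (-(IX / (P1 * σ2)) * u - IY * (P2 / P1) / (P3 * σ3) * (1 / (1 + u))) := by
  have hcont : ContinuousOn (relayOutageThreshold P1 P2 P3 IX IY γ2) (uIcc 0 (IX / P1 * χ)) :=
    (continuousOn_relayOutageThreshold hP1 hIX).mono fun x hx => by
      rw [uIcc_of_le (by positivity)] at hx
      exact hx.1
  simp_rw [mul_one_sub]
  rw [intervalIntegral.integral_sub (by apply Continuous.intervalIntegrable; fun_prop)
      (ContinuousOn.intervalIntegrable (by fun_prop)), integral_inv_mul_exp_neg_div,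
    integral_mul_exp_neg_relayOutageThreshold hP1.ne' hIX.ne' hχ, neg_zero, zero_div, exp_zero,
    show -(IX / P1 * χ) / σ2 = -(IX * χ) / (P1 * σ2) by ring]

lemma toReal_lintegral_one_sub_exp_neg_relayOutageThreshold (hσ2 : 0 < σ2) (hσ3 : 0 < σ3)
    (hP1 : 0 < P1) (hP3 : 0 < P3) (hIX : 0 < IX) (hIY : 0 < IY) (hγ2 : 0 < γ2)
    (hlam : γ2 < P2 / P1) :
    (∫⁻ x, ENNReal.ofReal (1 - exp (-relayOutageThreshold P1 P2 P3 IX IY γ2 x / σ3))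
        ∂expMean σ2).toReal =
      1 - exp (-(IX * (γ2 / (P2 / P1 - γ2))) / (P1 * σ2)) -
        IX / (P1 * σ2) * exp (IY * (P2 / P1 - γ2) / (P3 * σ3)) *
          ∫ u in 0..γ2 / (P2 / P1 - γ2),
            exp (-(IX / (P1 * σ2)) * u - IY * (P2 / P1) / (P3 * σ3) * (1 / (1 + u))) := by
  have hgap : 0 < P2 - γ2 * P1 := by rw [lt_div_iff₀ hP1] at hlam; linarith
  have hχ : 0 ≤ γ2 / (P2 / P1 - γ2) := div_nonneg hγ2.le (sub_pos.2 hlam).le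
  set c := IX / P1 * (γ2 / (P2 / P1 - γ2)) with hc_def
  have hc0 : 0 ≤ c := mul_nonneg (div_pos hIX hP1).le hχ
  have hc : c = γ2 * IX / (P2 - γ2 * P1) := by
    rw [hc_def, div_sub' hP1.ne']
    field_simp
  set g := relayOutageThreshold P1 P2 P3 IX IY γ2
  have hf_cont : ContinuousOn (fun x => 1 - exp (-g x / σ3)) (Icc 0 c) := by
    have hg : ContinuousOn g (Icc 0 c) :=
      (continuousOn_relayOutageThreshold hP1 hIX).mono Icc_subset_Ici_self
    fun_prop
  have hf_nonneg (x : ℝ) (hx : x ∈ Icc 0 c) : 0 ≤ 1 - exp (-g x / σ3) :=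
    one_sub_exp_neg_div_nonneg
      (relayOutageThreshold_nonneg hP1 hP3 hIX hIY hgap hx.1 (hc ▸ hx.2)) hσ3.le
  have hf_nonpos (x : ℝ) (hx : c ≤ x) : 1 - exp (-g x / σ3) ≤ 0 :=
    one_sub_exp_neg_div_nonpos
      (relayOutageThreshold_nonpos hP1 hP3 hIX hIY hgap (hc0.trans hx) (hc ▸ hx)) hσ3.le
  rw [lintegral_ofReal_expMean hσ2 hc0 hf_cont hf_nonneg hf_nonpos,
    ENNReal.toReal_ofReal (intervalIntegral.integral_nonneg hc0 fun x hx =>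
      mul_nonneg (by positivity) (hf_nonneg x hx)),
    integral_mul_one_sub_exp_neg_relayOutageThreshold hP1 hIX hχ]

end relayOutageThreshold

theorem stmt_8_general {Ω : Type*} [MeasurableSpace Ω] (P : Measure Ω) [IsProbabilityMeasure P]
    (W2 W3 : Ω → ℝ) (σh2 σh3 P1 P2 P3 IX IY γ2 : ℝ)
    (hσh2 : 0 < σh2) (hσh3 : 0 < σh3)
    (hP1 : 0 < P1) (hP3 : 0 < P3) (hIX : 0 < IX) (hIY : 0 < IY)
    (hγ2 : 0 < γ2) (hlam : γ2 < P2 / P1)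
    (hind : IndepFun W2 W3 P)
    (hW2 : P.map W2 = expMean σh2) (hW3 : P.map W3 = expMean σh3)
    (lamP χ Θ : ℝ)
    (hlamP : lamP = P2 / P1) (hχ : χ = γ2 / (lamP - γ2))
    (hΘ : Θ = ∫ u in (0:ℝ)..χ,
        Real.exp (-(IX / (P1 * σh2)) * u - (IY * lamP / (P3 * σh3)) * (1 / (1 + u)))) :
    (P {ω | W2 ω * P2 / (W2 ω * P1 + IX) + W3 ω * P3 / IY < γ2}).toReal =
      1 - Real.exp (-(IX * χ) / (P1 * σh2)) -
        (IX / (P1 * σh2)) * Real.exp (IY * (lamP - γ2) / (P3 * σh3)) * Θ := by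
  subst hlamP hχ hΘ
  have hevent : {ω | W2 ω * P2 / (W2 ω * P1 + IX) + W3 ω * P3 / IY < γ2} =
      {ω | W3 ω < relayOutageThreshold P1 P2 P3 IX IY γ2 (W2 ω)} :=
    Set.ext fun ω => (lt_relayOutageThreshold_iff hP3 hIY _ _).symm
  rw [hevent, measure_lt_comp_of_indepFun (aemeasurable_of_map_eq_expMean hσh2 hW2)
    (aemeasurable_of_map_eq_expMean hσh3 hW3) hind measurable_relayOutageThreshold, hW2, hW3]
  simp_rw [expMean_Iio hσh3]
  exact toReal_lintegral_one_sub_exp_neg_relayOutageThreshold hσh2 hσh3 hP1 hP3 hIX hIY hγ2 hlam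

/-- Lemma 2, eq. (14): approximate outage probability of the far
user UE2 in the relaying case.  With `W2 = |ĥ2|²`, `W3 = |ĥ3|²` independent
exponentials, constant interference-plus-noise terms `IX, IY > 0`,
`X̃ = W2·P2/(W2·P1 + IX)`, `Ỹ = W3·P3/IY`, `λ_P = P2/P1 > γ̄2` and
`χ = γ̄2/(λ_P − γ̄2)`:
`P{X̃ + Ỹ < γ̄2} = 1 − exp(−IX·χ/(P1·σ̂2²)) − (IX/(P1·σ̂2²))·exp(IY·(λ_P−γ̄2)/(P3·σ̂3²))·Θ(χ)`
with `Θ(χ) = ∫₀^χ exp(−(IX/(P1·σ̂2²))·u − (IY·λ_P/(P3·σ̂3²))/(1+u)) du`. -/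
theorem stmt_8 {Ω : Type*} [MeasurableSpace Ω] (P : Measure Ω) [IsProbabilityMeasure P]
    (W2 W3 : Ω → ℝ) (σh2 σh3 P1 P2 P3 IX IY γ2 : ℝ)
    (hσh2 : 0 < σh2) (hσh3 : 0 < σh3)
    (hP1 : 0 < P1) (hP2 : 0 < P2) (hP3 : 0 < P3) (hIX : 0 < IX) (hIY : 0 < IY)
    (hγ2 : 0 < γ2) (hlam : γ2 < P2 / P1)
    (hind : IndepFun W2 W3 P)
    (hW2 : P.map W2 = expMean σh2) (hW3 : P.map W3 = expMean σh3)
    (lamP χ Θ : ℝ)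
    (hlamP : lamP = P2 / P1) (hχ : χ = γ2 / (lamP - γ2))
    (hΘ : Θ = ∫ u in (0:ℝ)..χ,
        Real.exp (-(IX / (P1 * σh2)) * u - (IY * lamP / (P3 * σh3)) * (1 / (1 + u)))) :
    (P {ω | W2 ω * P2 / (W2 ω * P1 + IX) + W3 ω * P3 / IY < γ2}).toReal =
      1 - Real.exp (-(IX * χ) / (P1 * σh2)) -
        (IX / (P1 * σh2)) * Real.exp (IY * (lamP - γ2) / (P3 * σh3)) * Θ :=
  stmt_8_general P W2 W3 σh2 σh3 P1 P2 P3 IX IY γ2 hσh2 hσh3 hP1 hP3 hIX hIY hγ2 hlam hind hW2 hW3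
    lamP χ Θ hlamP hχ hΘ
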